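/- Let G be a connected bull-free graph with no double wheel. If F is an induced subgraph of G isomorphic to F_0, then F is a magnet in G, that is, every vertex of G outside F has two adjacent neighbors in F. -/
import Mathlib


/-- The bull: vertices `a,b,c,d,e = 0,1,2,3,4` with edges `ab, bc, cd, be, ce`. -/
def bull : SimpleGraph (Fin 5) :=
  SimpleGraph.fromRel (fun a b => (a, b) ∈
    ([(0,1),(1,2),(2,3),(1,4),(2,4)] : List (Fin 5 × Fin 5)))

/-- The double wheel: a `C₅` plus two adjacent vertices each complete to the cycle. -/
def doubleWheel : SimpleGraph (Fin 7) :=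
  SimpleGraph.fromRel (fun a b => (a, b) ∈
    ([(0,1),(1,2),(2,3),(3,4),(4,0),(5,6),
      (5,0),(5,1),(5,2),(5,3),(5,4),
      (6,0),(6,1),(6,2),(6,3),(6,4)] : List (Fin 7 × Fin 7)))

/-- The graph `F₀`: a 5-cycle `v₁…v₅ = 0,…,4`, a vertex `v₆ = 5` complete to the
cycle, and a vertex `v₇ = 6` adjacent to `v₁, v₂, v₃, v₄`. -/
def F0 : SimpleGraph (Fin 7) :=
  SimpleGraph.fromRel (fun a b => (a, b) ∈
    ([(0,1),(1,2),(2,3),(3,4),(4,0),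
      (5,0),(5,1),(5,2),(5,3),(5,4),
      (6,0),(6,1),(6,2),(6,3)] : List (Fin 7 × Fin 7)))

/-- `G` contains no induced subgraph isomorphic to `F`. -/
def InducedFree {α β : Type*} (F : SimpleGraph α) (G : SimpleGraph β) : Prop :=
  ¬ ∃ f : α ↪ β, ∀ a b : α, G.Adj (f a) (f b) ↔ F.Adj a b

/-- A vertex subset `F` of `G` is a magnet if every vertex outside `F` has two
neighbors in `F` that are adjacent to each other. -/
def IsMagnet {V : Type*} (G : SimpleGraph V) (F : Set V) : Prop :=
  ∀ x ∉ F, ∃ u ∈ F, ∃ v ∈ F, G.Adj u v ∧ G.Adj x u ∧ G.Adj x v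

section MagnetAux

open Function

instance : DecidableRel F0.Adj := fun a b =>
  decidable_of_iff _ (SimpleGraph.fromRel_adj _ a b).symm

instance : DecidableRel bull.Adj := fun a b =>
  decidable_of_iff _ (SimpleGraph.fromRel_adj _ a b).symm

instance : DecidableRel doubleWheel.Adj := fun a b =>
  decidable_of_iff _ (SimpleGraph.fromRel_adj _ a b).symm

def f0L : List (List Bool) := [
  [false,true,false,false,true,true,true],
  [true,false,true,false,false,true,true],
  [false,true,false,true,false,true,true],
  [false,false,true,false,true,true,true],
  [true,false,false,true,false,true,false],
  [true,true,true,true,true,false,false],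
  [true,true,true,true,false,false,false]]

def bullL : List (List Bool) := [
  [false,true,false,false,false],
  [true,false,true,false,true],
  [false,true,false,true,true],
  [false,false,true,false,false],
  [false,true,true,false,false]]

def dwL : List (List Bool) := [
  [false,true,false,false,true,true,true],
  [true,false,true,false,false,true,true],
  [false,true,false,true,false,true,true],
  [false,false,true,false,true,true,true],
  [true,false,false,true,false,true,true],
  [true,true,true,true,true,false,true],
  [true,true,true,true,true,true,false]]


def f0B (i j : Fin 7) : Bool := (f0L.getD i.1 []).getD j.1 false
def bullB (i j : Fin 5) : Bool := (bullL.getD i.1 []).getD j.1 false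
def dwB (i j : Fin 7) : Bool := (dwL.getD i.1 []).getD j.1 false

lemma f0B_iff : ∀ a b, F0.Adj a b ↔ f0B a b = true := by decide
lemma bullB_iff : ∀ a b, bull.Adj a b ↔ bullB a b = true := by decide
lemma dwB_iff : ∀ a b, doubleWheel.Adj a b ↔ dwB a b = true := by decide

inductive Wit8 where
  | T (u v : Fin 7)
  | B (g : Fin 5 → Fin 8)
  | D (g : Fin 7 → Fin 8)

inductive Wit9 where
  | B (g : Fin 5 → Fin 9)
  | D (g : Fin 7 → Fin 9)

def Hadj1 (s : Fin 7 → Bool) (i j : Fin 8) : Prop :=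
  if hi : i.1 < 7 then
    if hj : j.1 < 7 then f0B ⟨i.1, hi⟩ ⟨j.1, hj⟩ = true
    else s ⟨i.1, hi⟩ = true
  else
    if hj : j.1 < 7 then s ⟨j.1, hj⟩ = true else False

def Hadj2 (s : Fin 7 → Bool) (i j : Fin 9) : Prop :=
  if hi : i.1 < 7 then
    if hj : j.1 < 7 then f0B ⟨i.1, hi⟩ ⟨j.1, hj⟩ = true
    else if j.1 = 7 then s ⟨i.1, hi⟩ = true else False
  else if i.1 = 7 then
    if hj : j.1 < 7 then s ⟨j.1, hj⟩ = true
    else if j.1 = 7 then False else True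
  else
    if hj : j.1 < 7 then False
    else if j.1 = 7 then True else False

instance (s : Fin 7 → Bool) (i j : Fin 8) : Decidable (Hadj1 s i j) := by
  unfold Hadj1; infer_instance

instance (s : Fin 7 → Bool) (i j : Fin 9) : Decidable (Hadj2 s i j) := by
  unfold Hadj2; infer_instance

def enc (s : Fin 7 → Bool) : ℕ :=
  (cond (s 0) 1 0) + (cond (s 1) 2 0) + (cond (s 2) 4 0) + (cond (s 3) 8 0) +
  (cond (s 4) 16 0) + (cond (s 5) 32 0) + (cond (s 6) 64 0)

def specA (s : Fin 7 → Bool) : Wit8 → Bool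
  | .T u v => s u && s v && f0B u v
  | .B g => decide ((∀ a b, g a = g b → a = b) ∧ ∀ a b, Hadj1 s (g a) (g b) ↔ bullB a b = true)
  | .D g => decide ((∀ a b, g a = g b → a = b) ∧ ∀ a b, Hadj1 s (g a) (g b) ↔ dwB a b = true)

def specB (s : Fin 7 → Bool) : Wit9 → Bool
  | .B g => decide ((∀ a b, g a = g b → a = b) ∧ ∀ a b, Hadj2 s (g a) (g b) ↔ bullB a b = true)
  | .D g => decide ((∀ a b, g a = g b → a = b) ∧ ∀ a b, Hadj2 s (g a) (g b) ↔ dwB a b = true)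

def tableA0 : List Wit8 := [
  Wit8.T 0 0,
  Wit8.B ![2,5,0,7,4],
  Wit8.B ![3,5,1,7,0],
  Wit8.T 0 1,
  Wit8.B ![0,5,2,7,3],
  Wit8.B ![3,5,0,7,1],
  Wit8.T 1 2,
  Wit8.T 0 1,
  Wit8.B ![0,5,3,7,2],
  Wit8.B ![1,5,3,7,4],
  Wit8.B ![0,5,3,7,2],
  Wit8.T 0 1,
  Wit8.T 2 3,
  Wit8.T 2 3,
  Wit8.T 1 2,
  Wit8.T 0 1]

def tableA1 : List Wit8 := [
  Wit8.B ![1,5,4,7,3],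
  Wit8.T 0 4,
  Wit8.B ![2,5,4,7,0],
  Wit8.T 0 1,
  Wit8.B ![0,5,2,7,3],
  Wit8.T 0 4,
  Wit8.T 1 2,
  Wit8.T 0 1,
  Wit8.T 3 4,
  Wit8.T 0 4,
  Wit8.T 3 4,
  Wit8.T 0 1,
  Wit8.T 2 3,
  Wit8.T 0 4,
  Wit8.T 1 2,
  Wit8.T 0 1]

def tableA2 : List Wit8 := [
  Wit8.B ![6,0,5,7,4],
  Wit8.T 0 5,
  Wit8.T 1 5,
  Wit8.T 0 1,
  Wit8.T 2 5,
  Wit8.T 0 5,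
  Wit8.T 1 2,
  Wit8.T 0 1,
  Wit8.T 3 5,
  Wit8.T 0 5,
  Wit8.T 1 5,
  Wit8.T 0 1,
  Wit8.T 2 3,
  Wit8.T 0 5,
  Wit8.T 1 2,
  Wit8.T 0 1]

def tableA3 : List Wit8 := [
  Wit8.T 4 5,
  Wit8.T 0 4,
  Wit8.T 1 5,
  Wit8.T 0 1,
  Wit8.T 2 5,
  Wit8.T 0 4,
  Wit8.T 1 2,
  Wit8.T 0 1,
  Wit8.T 3 4,
  Wit8.T 0 4,
  Wit8.T 1 5,
  Wit8.T 0 1,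
  Wit8.T 2 3,
  Wit8.T 0 4,
  Wit8.T 1 2,
  Wit8.T 0 1]

def tableA4 : List Wit8 := [
  Wit8.B ![4,0,6,7,1],
  Wit8.T 0 6,
  Wit8.T 1 6,
  Wit8.T 0 1,
  Wit8.T 2 6,
  Wit8.T 0 6,
  Wit8.T 1 2,
  Wit8.T 0 1,
  Wit8.T 3 6,
  Wit8.T 0 6,
  Wit8.T 1 6,
  Wit8.T 0 1,
  Wit8.T 2 3,
  Wit8.T 0 6,
  Wit8.T 1 2,
  Wit8.T 0 1]

def tableA5 : List Wit8 := [
  Wit8.B ![1,5,4,7,3],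
  Wit8.T 0 4,
  Wit8.T 1 6,
  Wit8.T 0 1,
  Wit8.T 2 6,
  Wit8.T 0 4,
  Wit8.T 1 2,
  Wit8.T 0 1,
  Wit8.T 3 4,
  Wit8.T 0 4,
  Wit8.T 1 6,
  Wit8.T 0 1,
  Wit8.T 2 3,
  Wit8.T 0 4,
  Wit8.T 1 2,
  Wit8.T 0 1]

def tableA6 : List Wit8 := [
  Wit8.B ![4,0,6,7,1],
  Wit8.T 0 5,
  Wit8.T 1 5,
  Wit8.T 0 1,
  Wit8.T 2 5,
  Wit8.T 0 5,
  Wit8.T 1 2,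
  Wit8.T 0 1,
  Wit8.T 3 5,
  Wit8.T 0 5,
  Wit8.T 1 5,
  Wit8.T 0 1,
  Wit8.T 2 3,
  Wit8.T 0 5,
  Wit8.T 1 2,
  Wit8.T 0 1]

def tableA7 : List Wit8 := [
  Wit8.T 4 5,
  Wit8.T 0 4,
  Wit8.T 1 5,
  Wit8.T 0 1,
  Wit8.T 2 5,
  Wit8.T 0 4,
  Wit8.T 1 2,
  Wit8.T 0 1,
  Wit8.T 3 4,
  Wit8.T 0 4,
  Wit8.T 1 5,
  Wit8.T 0 1,
  Wit8.T 2 3,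
  Wit8.T 0 4,
  Wit8.T 1 2,
  Wit8.T 0 1]

def tableA : List Wit8 := tableA0 ++ tableA1 ++ tableA2 ++ tableA3 ++ tableA4 ++ tableA5 ++ tableA6 ++ tableA7

def tableB0 : List Wit9 := [
  Wit9.B ![0,1,2,3,4],
  Wit9.B ![2,5,0,7,4],
  Wit9.B ![3,5,1,7,0],
  Wit9.B ![2,1,0,4,7],
  Wit9.B ![0,5,2,7,3],
  Wit9.B ![3,5,0,7,1],
  Wit9.B ![0,1,2,3,7],
  Wit9.B ![3,2,7,8,1],
  Wit9.B ![0,5,3,7,2],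
  Wit9.B ![1,5,3,7,4],
  Wit9.B ![0,5,3,7,2],
  Wit9.B ![2,1,0,4,7],
  Wit9.B ![1,2,3,4,7],
  Wit9.B ![1,2,3,4,7],
  Wit9.B ![0,1,7,8,2],
  Wit9.B ![4,0,7,8,1]]

def tableB1 : List Wit9 := [
  Wit9.B ![1,5,4,7,3],
  Wit9.B ![1,0,4,3,7],
  Wit9.B ![2,5,4,7,0],
  Wit9.B ![2,1,7,8,0],
  Wit9.B ![0,5,2,7,3],
  Wit9.B ![1,0,4,3,7],
  Wit9.B ![0,1,2,3,7],
  Wit9.B ![3,2,7,8,1],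
  Wit9.B ![0,4,3,2,7],
  Wit9.B ![1,0,7,8,4],
  Wit9.B ![0,4,3,2,7],
  Wit9.B ![2,1,7,8,0],
  Wit9.B ![0,4,7,8,3],
  Wit9.B ![1,0,7,8,4],
  Wit9.B ![0,1,7,8,2],
  Wit9.B ![6,0,7,8,4]]

def tableB2 : List Wit9 := [
  Wit9.B ![6,0,5,7,4],
  Wit9.B ![2,5,7,8,0],
  Wit9.B ![3,5,7,8,1],
  Wit9.B ![2,1,0,4,7],
  Wit9.B ![0,5,7,8,2],
  Wit9.B ![3,5,7,8,0],
  Wit9.B ![0,1,2,3,7],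
  Wit9.B ![3,2,7,8,1],
  Wit9.B ![0,5,7,8,3],
  Wit9.B ![1,5,7,8,3],
  Wit9.B ![0,5,7,8,3],
  Wit9.B ![2,1,0,4,7],
  Wit9.B ![0,5,7,8,2],
  Wit9.B ![1,2,3,4,7],
  Wit9.B ![0,1,7,8,2],
  Wit9.B ![4,0,7,8,1]]

def tableB3 : List Wit9 := [
  Wit9.B ![1,5,7,8,4],
  Wit9.B ![1,0,4,3,7],
  Wit9.B ![2,5,7,8,4],
  Wit9.B ![2,1,7,8,0],
  Wit9.B ![0,5,7,8,2],
  Wit9.B ![1,0,4,3,7],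
  Wit9.B ![0,1,2,3,7],
  Wit9.B ![3,2,7,8,1],
  Wit9.B ![0,4,3,2,7],
  Wit9.B ![1,0,7,8,4],
  Wit9.B ![0,4,3,2,7],
  Wit9.B ![2,1,7,8,0],
  Wit9.B ![0,4,7,8,3],
  Wit9.B ![1,0,7,8,4],
  Wit9.B ![0,1,7,8,2],
  Wit9.B ![6,0,7,8,4]]

def tableB4 : List Wit9 := [
  Wit9.B ![4,0,6,7,1],
  Wit9.B ![2,5,0,7,4],
  Wit9.B ![3,5,1,7,0],
  Wit9.B ![2,1,0,4,7],
  Wit9.B ![0,5,2,7,3],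
  Wit9.B ![3,5,0,7,1],
  Wit9.B ![0,1,2,3,7],
  Wit9.B ![3,2,7,8,1],
  Wit9.B ![0,5,3,7,2],
  Wit9.B ![1,5,3,7,4],
  Wit9.B ![0,5,3,7,2],
  Wit9.B ![2,1,0,4,7],
  Wit9.B ![0,6,7,8,2],
  Wit9.B ![1,2,3,4,7],
  Wit9.B ![0,1,7,8,2],
  Wit9.B ![4,0,7,8,1]]

def tableB5 : List Wit9 := [
  Wit9.B ![1,5,4,7,3],
  Wit9.B ![1,0,4,3,7],
  Wit9.B ![2,5,4,7,0],
  Wit9.B ![2,1,7,8,0],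
  Wit9.B ![0,5,2,7,3],
  Wit9.B ![1,0,4,3,7],
  Wit9.B ![0,1,2,3,7],
  Wit9.B ![3,2,7,8,1],
  Wit9.B ![0,4,3,2,7],
  Wit9.B ![1,0,7,8,4],
  Wit9.B ![0,4,3,2,7],
  Wit9.B ![2,1,7,8,0],
  Wit9.B ![0,4,7,8,3],
  Wit9.B ![1,0,7,8,4],
  Wit9.B ![0,1,7,8,2],
  Wit9.B ![5,0,7,8,6]]

def tableB6 : List Wit9 := [
  Wit9.B ![4,0,6,7,1],
  Wit9.B ![2,5,7,8,0],
  Wit9.B ![3,5,7,8,1],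
  Wit9.B ![2,1,0,4,7],
  Wit9.B ![0,5,7,8,2],
  Wit9.B ![3,5,7,8,0],
  Wit9.B ![0,1,2,3,7],
  Wit9.B ![3,2,7,8,1],
  Wit9.B ![0,5,7,8,3],
  Wit9.B ![1,5,7,8,3],
  Wit9.B ![0,5,7,8,3],
  Wit9.B ![2,1,0,4,7],
  Wit9.B ![0,5,7,8,2],
  Wit9.B ![1,2,3,4,7],
  Wit9.B ![0,1,7,8,2],
  Wit9.B ![4,0,7,8,1]]

def tableB7 : List Wit9 := [
  Wit9.B ![1,5,7,8,4],
  Wit9.B ![1,0,4,3,7],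
  Wit9.B ![2,5,7,8,4],
  Wit9.B ![2,1,7,8,0],
  Wit9.B ![0,5,7,8,2],
  Wit9.B ![1,0,4,3,7],
  Wit9.B ![0,1,2,3,7],
  Wit9.B ![3,2,7,8,1],
  Wit9.B ![0,4,3,2,7],
  Wit9.B ![1,0,7,8,4],
  Wit9.B ![0,4,3,2,7],
  Wit9.B ![2,1,7,8,0],
  Wit9.B ![0,4,7,8,3],
  Wit9.B ![1,0,7,8,4],
  Wit9.B ![0,1,7,8,2],
  Wit9.D ![0,1,2,3,4,5,7]]

def tableB : List Wit9 := tableB0 ++ tableB1 ++ tableB2 ++ tableB3 ++ tableB4 ++ tableB5 ++ tableB6 ++ tableB7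


set_option maxRecDepth 100000 in
set_option maxHeartbeats 2000000 in
lemma keyA : ∀ s : Fin 7 → Bool, (∃ i, s i = true) →
    specA s (tableA.getD (enc s) (Wit8.T 0 0)) = true := by decide

set_option maxRecDepth 100000 in
set_option maxHeartbeats 2000000 in
lemma keyB : ∀ s : Fin 7 → Bool, (∃ i, s i = true) →
    specB s (tableB.getD (enc s) (Wit9.B ![0,0,0,0,0])) = true := by decide

lemma lift_bull {V : Type*} (G : SimpleGraph V) (hbull : InducedFree bull G) {n : ℕ}
    (H : Fin n → Fin n → Prop) (m : Fin n → V)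
    (minj : ∀ i j, m i = m j → i = j)
    (hm : ∀ i j, G.Adj (m i) (m j) ↔ H i j)
    (g : Fin 5 → Fin n) (ginj : ∀ a b, g a = g b → a = b)
    (hg : ∀ a b, H (g a) (g b) ↔ bullB a b = true) : False := by
  refine hbull ⟨⟨m ∘ g, fun a b h => ginj a b (minj _ _ h)⟩, fun a b => ?_⟩
  exact (hm _ _).trans ((hg a b).trans (bullB_iff a b).symm)

lemma lift_dw {V : Type*} (G : SimpleGraph V) (hdw : InducedFree doubleWheel G) {n : ℕ}
    (H : Fin n → Fin n → Prop) (m : Fin n → V)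
    (minj : ∀ i j, m i = m j → i = j)
    (hm : ∀ i j, G.Adj (m i) (m j) ↔ H i j)
    (g : Fin 7 → Fin n) (ginj : ∀ a b, g a = g b → a = b)
    (hg : ∀ a b, H (g a) (g b) ↔ dwB a b = true) : False := by
  refine hdw ⟨⟨m ∘ g, fun a b h => ginj a b (minj _ _ h)⟩, fun a b => ?_⟩
  exact (hm _ _).trans ((hg a b).trans (dwB_iff a b).symm)

def mfun {V : Type*} (f : Fin 7 ↪ V) (x : V) : Fin 8 → V :=
  fun i => if h : i.1 < 7 then f ⟨i.1, h⟩ else x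

lemma mfun_spec {V : Type*} (G : SimpleGraph V) (f : Fin 7 ↪ V)
    (hF0 : ∀ a b : Fin 7, G.Adj (f a) (f b) ↔ F0.Adj a b)
    (x : V) (hx : x ∉ Set.range f) (s : Fin 7 → Bool)
    (hs : ∀ i, s i = true ↔ G.Adj x (f i)) :
    (∀ i j, mfun f x i = mfun f x j → i = j) ∧
    (∀ i j, G.Adj (mfun f x i) (mfun f x j) ↔ Hadj1 s i j) := by
  constructor
  · intro i j h
    dsimp only [mfun] at h
    split_ifs at h with h1 h2 h2
    · have hv := f.injective h
      have hv2 : i.1 = j.1 := by simpa [Fin.ext_iff] using hv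
      exact Fin.ext hv2
    · exact absurd ⟨_, h⟩ hx
    · exact absurd ⟨_, h.symm⟩ hx
    · have := i.isLt; have := j.isLt; exact Fin.ext (by omega)
  · intro i j
    dsimp only [mfun, Hadj1]
    split_ifs with h1 h2 h2
    · exact (hF0 _ _).trans (f0B_iff _ _)
    · rw [G.adj_comm]; exact (hs _).symm
    · exact (hs _).symm
    · simp [G.irrefl]

def m2fun {V : Type*} (f : Fin 7 ↪ V) (x y : V) : Fin 9 → V :=
  fun i => if h : i.1 < 7 then f ⟨i.1, h⟩ else if i.1 = 7 then y else x

lemma m2fun_spec {V : Type*} (G : SimpleGraph V) (f : Fin 7 ↪ V)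
    (hF0 : ∀ a b : Fin 7, G.Adj (f a) (f b) ↔ F0.Adj a b)
    (x y : V) (hx : x ∉ Set.range f) (hy : y ∉ Set.range f)
    (hxy : G.Adj x y) (hxn : ∀ i, ¬ G.Adj x (f i)) (s : Fin 7 → Bool)
    (hs : ∀ i, s i = true ↔ G.Adj y (f i)) :
    (∀ i j, m2fun f x y i = m2fun f x y j → i = j) ∧
    (∀ i j, G.Adj (m2fun f x y i) (m2fun f x y j) ↔ Hadj2 s i j) := by
  constructor
  · intro i j h
    dsimp only [m2fun] at h
    split_ifs at h with h1 h2 h3 h3 h2 h3 h3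
    · have hv := f.injective h
      have hv2 : i.1 = j.1 := by simpa [Fin.ext_iff] using hv
      exact Fin.ext hv2
    · exact absurd ⟨_, h⟩ hy
    · exact absurd ⟨_, h⟩ hx
    · exact absurd ⟨_, h.symm⟩ hy
    · have := i.isLt; have := j.isLt; exact Fin.ext (by omega)
    · exact absurd h.symm hxy.ne
    · exact absurd ⟨_, h.symm⟩ hx
    · exact absurd h hxy.ne
    · have := i.isLt; have := j.isLt; exact Fin.ext (by omega)
  · intro i j
    dsimp only [m2fun, Hadj2]
    split_ifs with h1 h2 h3 h3 h2 h3 h3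
    · exact (hF0 _ _).trans (f0B_iff _ _)
    · rw [G.adj_comm]; exact (hs _).symm
    · constructor
      · intro hadj; exact absurd hadj.symm (hxn _)
      · intro hf; exact hf.elim
    · exact (hs _).symm
    · simp [G.irrefl]
    · simp [hxy.symm]
    · constructor
      · intro hadj; exact absurd hadj (hxn _)
      · intro hf; exact hf.elim
    · simp [hxy]
    · simp [G.irrefl]

end MagnetAux

/-- In a finite connected bull-free graph with no induced double wheel, any induced
copy of `F₀` is a magnet: every vertex outside the copy has two adjacent neighbors
in it. -/
theorem F0_is_magnet {V : Type*} [Fintype V] (G : SimpleGraph V)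
    (hconn : G.Connected) (hbull : InducedFree bull G)
    (hdw : InducedFree doubleWheel G)
    (f : Fin 7 ↪ V) (hF0 : ∀ a b : Fin 7, G.Adj (f a) (f b) ↔ F0.Adj a b) :
    IsMagnet G (Set.range f) := by
  classical
  have pat : ∀ x : V, ∃ s : Fin 7 → Bool, ∀ i, s i = true ↔ G.Adj x (f i) := fun x =>
    ⟨fun i => decide (G.Adj x (f i)), fun i => decide_eq_true_iff⟩
  have hdom : ∀ z : V, z ∉ Set.range f → ∃ i, G.Adj z (f i) := by
    intro z hz
    by_contra hno
    push_neg at hno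
    obtain ⟨w⟩ := hconn.preconnected z (f 0)
    have hcl : ∀ (y c : V), c ∈ Set.range f → G.Walk y c →
        y ∈ Set.range f ∨ ∃ i, G.Adj y (f i) := by
      intro y c hc w'
      induction w' with
      | nil => exact Or.inl hc
      | @cons u b c h p ih =>
        by_cases hyr : u ∈ Set.range f
        · exact Or.inl hyr
        by_cases hyn : ∃ i, G.Adj u (f i)
        · exact Or.inr hyn
        push_neg at hyn
        exfalso
        by_cases hbr : b ∈ Set.range f
        · obtain ⟨i, hi⟩ := hbr
          exact hyn i (hi ▸ h)
        have hbn : ∃ i, G.Adj b (f i) := by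
          rcases ih hc with h' | h'
          · exact absurd h' hbr
          · exact h'
        obtain ⟨s, hs⟩ := pat b
        obtain ⟨i1, hi1⟩ := hbn
        have hkey := keyB s ⟨i1, (hs i1).mpr hi1⟩
        obtain ⟨minj, hm⟩ := m2fun_spec G f hF0 u b hyr hbr h hyn s hs
        rcases hwit : tableB.getD (enc s) (Wit9.B ![0,0,0,0,0]) with ⟨g⟩ | ⟨g⟩
        · rw [hwit] at hkey
          simp only [specB] at hkey
          have hc := of_decide_eq_true hkey
          exact lift_bull G hbull (Hadj2 s) _ minj hm g hc.1 hc.2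
        · rw [hwit] at hkey
          simp only [specB] at hkey
          have hc := of_decide_eq_true hkey
          exact lift_dw G hdw (Hadj2 s) _ minj hm g hc.1 hc.2
    rcases hcl z (f 0) ⟨0, rfl⟩ w with h | ⟨i, hi⟩
    · exact hz h
    · exact hno i hi
  intro x hx
  obtain ⟨i0, hi0⟩ := hdom x hx
  obtain ⟨s, hs⟩ := pat x
  have hkey := keyA s ⟨i0, (hs i0).mpr hi0⟩
  obtain ⟨minj, hm⟩ := mfun_spec G f hF0 x hx s hs
  rcases hwit : tableA.getD (enc s) (Wit8.T 0 0) with ⟨u, v⟩ | ⟨g⟩ | ⟨g⟩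
  · rw [hwit] at hkey
    simp only [specA, Bool.and_eq_true] at hkey
    obtain ⟨⟨h1, h2⟩, h3⟩ := hkey
    exact ⟨f u, ⟨u, rfl⟩, f v, ⟨v, rfl⟩, (hF0 u v).mpr ((f0B_iff u v).mpr h3),
      (hs u).mp h1, (hs v).mp h2⟩
  · exfalso
    rw [hwit] at hkey
    simp only [specA] at hkey
    have hc := of_decide_eq_true hkey
    exact lift_bull G hbull (Hadj1 s) _ minj hm g hc.1 hc.2
  · exfalso
    rw [hwit] at hkey
    simp only [specA] at hkey
    have hc := of_decide_eq_true hkey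
    exact lift_dw G hdw (Hadj1 s) _ minj hm g hc.1 hc.2
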